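/- For each • ∈ {A, D}: (a) for every i ∈ Σ_{n+1} and every 0 ≤ s ≤ N, the word E_•(s)(i) is a reduced word in Σ_{n+2} with C_•(E_•(s)(i)) = i (up to 2-move equivalence) and ind_•(E_•(s)(i)) = s; (b) for every i ∈ Σ_{n+2}, the word E_•(ind_•(i))(C_•(i)) is 2-move equivalent to i. In particular the map i ↦ (C_•(i), ind_•(i)) from Σ_{n+2} to Σ_{n+1} × {0,…,N} is surjective, E_• is a section of it, and the composition of E_• with the quotient map to 2-move equivalence classes of Σ_{n+2} is surjective. -/

import Mathlib

/-!
Read a word as a wiring diagram and follow the wire that starts in the last column. In a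
reduced word of `w₀` this wire carries the largest label, so it can only move left: a move to
the right would undo an inversion, and `w₀` leaves no room for that. Deleting the wire gives a
word of one rank less, and counting the crossings to its right gives a number; both are
invariant under 2-moves. On a word `u D_m v` they are `u (v - 1)` and `|v|`, so `C_D` and
`ind_D` are well defined and `E_D(ind_D i)(C_D i) = u D_m v ∼ i`. Following the successive
crossings of the wire, and commuting the letters in between out of the way, brings every reduced
word into the form `u D_m v`. The `A` case is the `D` case conjugated by `w₀`, which reflects
every letter `a` to `m + 1 - a`.
-/

open scoped Classical

noncomputable section

namespace StringPolytope

/-! ### Words, reduced words, two-moves -/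

/-- the simple transposition `s_a = (a, a+1)` acting on `ℕ` (wires are `1, …, n+1`). -/
def sTrans (a : ℕ) : Equiv.Perm ℕ := Equiv.swap a (a + 1)

/-- product `s_{i₁} ⋯ s_{i_N}` of the simple transpositions of a word. -/
def wordProd (w : List ℕ) : Equiv.Perm ℕ := (w.map sTrans).prod

/-- the longest element `w₀` of the symmetric group on `{1, …, n+1}`,
sending `k ↦ n + 2 - k` there and fixing everything else. -/
def longestPerm (n : ℕ) : Equiv.Perm ℕ :=
  Function.Involutive.toPerm
    (fun k => if 1 ≤ k ∧ k ≤ n + 1 then n + 2 - k else k)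
    (by intro k; dsimp only; split_ifs <;> omega)

/-- `w ∈ Σ_{n+1}`: a reduced word of the longest element of `S_{n+1}`,
i.e. a word over `[n] = {1,…,n}` of length `N = n(n+1)/2` whose product is `w₀`. -/
def IsReduced (n : ℕ) (w : List ℕ) : Prop :=
  w.length = n * (n + 1) / 2 ∧ (∀ a ∈ w, 1 ≤ a ∧ a ≤ n) ∧ wordProd w = longestPerm n

/-- a single 2-move: exchange two adjacent letters `(a, b)` with `|a - b| > 1`. -/
def TwoMoveStep (w w' : List ℕ) : Prop :=
  ∃ u v a b, (a + 1 < b ∨ b + 1 < a) ∧ w = u ++ a :: b :: v ∧ w' = u ++ b :: a :: v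

/-- 2-move equivalence of words. -/
def TwoMoveEquiv : List ℕ → List ℕ → Prop := Relation.ReflTransGen TwoMoveStep

/-- `A_n = (1, 2, …, n)`. -/
def ascWord (n : ℕ) : List ℕ := (List.range n).map (· + 1)

/-- `D_n = (n, n-1, …, 1)`. -/
def descWord (n : ℕ) : List ℕ := (ascWord n).reverse

/-! ### The wiring diagram -/

/-- the letter `i_j` of `w` (1-based index `j`); the node `t_j` lies in column `i_j`. -/
def letterAt (w : List ℕ) (j : ℕ) : ℕ := w.getD (j - 1) 0

/-- `1 ≤ j ≤ N`: `t_j` is an actual node of the diagram. -/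
def ValidNode (w : List ℕ) (j : ℕ) : Prop := 1 ≤ j ∧ j ≤ w.length

/-- the column-to-wire assignment just above node `t_j`
(at the top of the diagram, wire `k` is in column `k`). -/
def stateAbove (w : List ℕ) (j : ℕ) : Equiv.Perm ℕ := wordProd (w.take (j - 1))

/-- the column-to-wire assignment just below node `t_j`. -/
def stateBelow (w : List ℕ) (j : ℕ) : Equiv.Perm ℕ := wordProd (w.take j)

/-- one of the two wires crossing at node `t_j` (the one leaving upward-left). -/
def wireX (w : List ℕ) (j : ℕ) : ℕ := stateAbove w j (letterAt w j)

/-- the other wire crossing at node `t_j` (the one leaving upward-right). -/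
def wireY (w : List ℕ) (j : ℕ) : ℕ := stateAbove w j (letterAt w j + 1)

/-- the node `t_j` lies on the wire `ℓ_r`. -/
def NodeOnWire (w : List ℕ) (j r : ℕ) : Prop := wireX w j = r ∨ wireY w j = r

/-- given one wire `r` at node `t_j`, the other wire crossing there. -/
def otherWire (w : List ℕ) (j r : ℕ) : ℕ := if wireX w j = r then wireY w j else wireX w j

/-- the column of wire `ℓ_r` at the height of node `t_j`. -/
def wireCol (w : List ℕ) (j r : ℕ) : ℕ := (stateBelow w j).symm r

/-- node `t_j` lies strictly below the wire `ℓ_{n+1}`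
(which runs from the bottom-left corner to the top-right corner). -/
def BelowWireLast (n : ℕ) (w : List ℕ) (j : ℕ) : Prop :=
  wireCol w j (n + 1) < letterAt w j

/-- node `t_j` lies strictly above the wire `ℓ_{n+1}`. -/
def AboveWireLast (n : ℕ) (w : List ℕ) (j : ℕ) : Prop :=
  letterAt w j + 1 < wireCol w j (n + 1)

/-- node `t_j` lies strictly below the wire `ℓ_1`
(which runs from the bottom-right corner to the top-left corner). -/
def BelowWireOne (w : List ℕ) (j : ℕ) : Prop :=
  letterAt w j + 1 < wireCol w j 1

/-- node `t_j` lies strictly above the wire `ℓ_1`. -/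
def AboveWireOne (w : List ℕ) (j : ℕ) : Prop :=
  wireCol w j 1 < letterAt w j

/-! ### Rigorous (Gleizer–Postnikov) paths

A path in `G(i, k)` is encoded by `k` together with the list of its switching
nodes, in order of travel.  Wires `ℓ_1, …, ℓ_k` are oriented upward
(decreasing node index) and the remaining wires downward. -/

/-- the (1-based indices of the) nodes lying on wire `ℓ_r`, in order of increasing index. -/
def nodesOn (w : List ℕ) (r : ℕ) : List ℕ :=
  ((List.range w.length).map (· + 1)).filter (fun j => decide (NodeOnWire w j r))

/-- nodes on wire `ℓ_r` strictly between the nodes `t_a` and `t_b`. -/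
def segList (w : List ℕ) (r a b : ℕ) : List ℕ :=
  (nodesOn w r).filter (fun j => decide (min a b < j ∧ j < max a b))

/-- nodes on wire `ℓ_r` strictly below the node `t_a`. -/
def tailList (w : List ℕ) (r a : ℕ) : List ℕ :=
  (nodesOn w r).filter (fun j => decide (a < j))

/-- a forbidden fragment of `G(i, k)`: the path passes straight through node `t_j`
travelling along the wire `ℓ_r`, where the other wire `ℓ_b` crossing there has the same
orientation as `ℓ_r` and (`r < b` if both upward, `r > b` if both downward). -/
def Forbidden (w : List ℕ) (k j r : ℕ) : Prop :=
  (r ≤ k ∧ otherWire w j r ≤ k ∧ r < otherWire w j r) ∨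
  (k < r ∧ k < otherWire w j r ∧ otherWire w j r < r)

/-- travelling in `G(i,k)`: currently on wire `ℓ_r` at node `t_a` (just switched there),
with future switching nodes `ms`; the travel is legal and ends at `L_{k+1}`. -/
def TravelOK (w : List ℕ) (k : ℕ) : ℕ → ℕ → List ℕ → Prop
  | r, a, [] => r = k + 1 ∧ ∀ j ∈ tailList w r a, ¬ Forbidden w k j r
  | r, a, m :: ms =>
      ValidNode w m ∧ NodeOnWire w m r ∧
      (if r ≤ k then m < a else a < m) ∧
      (∀ j ∈ segList w r a m, ¬ Forbidden w k j r) ∧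
      TravelOK w k (otherWire w m r) m ms

/-- all nodes visited after the switch at node `t_a` onto wire `ℓ_r`. -/
def visitTail (w : List ℕ) : ℕ → ℕ → List ℕ → List ℕ
  | r, a, [] => tailList w r a
  | r, a, m :: ms => segList w r a m ++ m :: visitTail w (otherWire w m r) m ms

/-- the list of all nodes visited by the path (switching nodes and straight passes). -/
def visitList (w : List ℕ) (k : ℕ) : List ℕ → List ℕ
  | [] => []
  | m :: ms => tailList w k m ++ m :: visitTail w (otherWire w m k) m ms

/-- `(k, ms)` encodes a rigorous (Gleizer–Postnikov) path in `G(i, k)`: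
it starts at `L_k` going up the wire `ℓ_k`, switches wires exactly at the nodes
listed in `ms`, respects the orientation, ends at `L_{k+1}`, contains no forbidden
fragment and passes through each node at most once. -/
def IsGPPath (n : ℕ) (w : List ℕ) (k : ℕ) (ms : List ℕ) : Prop :=
  1 ≤ k ∧ k ≤ n ∧
  (match ms with
   | [] => False
   | m :: rest =>
       ValidNode w m ∧ NodeOnWire w m k ∧
       (∀ j ∈ tailList w k m, ¬ Forbidden w k j k) ∧
       TravelOK w k (otherWire w m k) m rest) ∧
  (visitList w k ms).Nodup

/-- the set `GP(i)` of all rigorous paths of `G(i)`. -/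
def GP (n : ℕ) (w : List ℕ) : Set (ℕ × List ℕ) := {p | IsGPPath n w p.1 p.2}

/-- `|GP(i)|`, the number of rigorous paths. -/
def numGP (n : ℕ) (w : List ℕ) : ℕ := (GP n w).ncard

/-- the successive switches of a path: `(node, from-wire, to-wire)`. -/
def pathSwitches (w : List ℕ) : ℕ → List ℕ → List (ℕ × ℕ × ℕ)
  | _, [] => []
  | r, m :: ms => (m, r, otherWire w m r) :: pathSwitches w (otherWire w m r) ms

/-- the wire-expression of a path: the successive wires travelled. -/
def wireSeq (w : List ℕ) : ℕ → List ℕ → List ℕ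
  | r, [] => [r]
  | r, m :: ms => r :: wireSeq w (otherWire w m r) ms

/-- the peaks of a path: switching nodes where the path switches from an
upward wire to a downward wire. -/
def peaks (w : List ℕ) (k : ℕ) (ms : List ℕ) : List ℕ :=
  ((pathSwitches w k ms).filter (fun e => decide (e.2.1 ≤ k ∧ k < e.2.2))).map (·.1)

/-! ### String cone, `λ`-cone, string polytope -/

/-- `N = n(n+1)/2`, the number of nodes. -/
abbrev Dim (n : ℕ) : ℕ := n * (n + 1) / 2

/-- the coefficient `a_j` of `t_j` in the string inequality of the path `(k, ms)`:
`+1` if the path switches at `t_j` from `ℓ_r` to `ℓ_s` with `r < s`,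
`-1` if it switches with `r > s`, and `0` otherwise. -/
def coeff (w : List ℕ) (k : ℕ) (ms : List ℕ) (j : ℕ) : ℝ :=
  ((pathSwitches w k ms).map (fun e =>
    if e.1 = j then (if e.2.1 < e.2.2 then (1 : ℝ) else -1) else 0)).sum

/-- the (primitive inward normal) coefficient vector of the string inequality of a path. -/
def normalVec (n : ℕ) (w : List ℕ) (p : ℕ × List ℕ) : Fin (Dim n) → ℝ :=
  fun j => coeff w p.1 p.2 ((j : ℕ) + 1)

/-- the left-hand side `∑ a_j t_j` of the string inequality of the path `p`. -/
def stringIneq (n : ℕ) (w : List ℕ) (p : ℕ × List ℕ) (t : Fin (Dim n) → ℝ) : ℝ :=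
  ∑ j : Fin (Dim n), normalVec n w p j * t j

/-- the string cone `C_i ⊆ ℝ^N`. -/
def stringCone (n : ℕ) (w : List ℕ) : Set (Fin (Dim n) → ℝ) :=
  {t | ∀ p ∈ GP n w, 0 ≤ stringIneq n w p t}

/-- the polyhedron cut out by all string inequalities except the one of `p₀`. -/
def stringConeExcept (n : ℕ) (w : List ℕ) (p₀ : ℕ × List ℕ) : Set (Fin (Dim n) → ℝ) :=
  {t | ∀ p ∈ GP n w, p ≠ p₀ → 0 ≤ stringIneq n w p t}

/-- the coefficient `a_k` in the `λ`-inequality of node `t_j`: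
`1` if `t_k` is one column left or right of `t_j`, `-2` if in the same column. -/
def lamCoeff (w : List ℕ) (j k : ℕ) : ℝ :=
  if letterAt w k = letterAt w j then -2
  else if letterAt w k = letterAt w j + 1 ∨ letterAt w k + 1 = letterAt w j then 1
  else 0

/-- the `λ`-inequality of node `t_{j+1}`:
`t_j ≤ λ_{i_j} + ∑_{k > j} a_k t_k`. -/
def LamIneq (n : ℕ) (w : List ℕ) (lam : ℕ → ℤ) (j : Fin (Dim n)) (t : Fin (Dim n) → ℝ) : Prop :=
  t j ≤ (lam (letterAt w ((j : ℕ) + 1)) : ℝ) +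
    ∑ k : Fin (Dim n),
      (if (j : ℕ) < (k : ℕ) then lamCoeff w ((j : ℕ) + 1) ((k : ℕ) + 1) else 0) * t k

/-- the `λ`-cone `C_i^λ ⊆ ℝ^N`. -/
def lamCone (n : ℕ) (w : List ℕ) (lam : ℕ → ℤ) : Set (Fin (Dim n) → ℝ) :=
  {t | ∀ j, LamIneq n w lam j t}

/-- the polyhedron cut out by all `λ`-inequalities except the one of `j₀`. -/
def lamConeExcept (n : ℕ) (w : List ℕ) (lam : ℕ → ℤ) (j₀ : Fin (Dim n)) :
    Set (Fin (Dim n) → ℝ) :=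
  {t | ∀ j, j ≠ j₀ → LamIneq n w lam j t}

/-- the string polytope `Δ_i(λ) = C_i ∩ C_i^λ`. -/
def stringPolytope (n : ℕ) (w : List ℕ) (lam : ℕ → ℤ) : Set (Fin (Dim n) → ℝ) :=
  stringCone n w ∩ lamCone n w lam

/-- `λ = λ_1 ϖ_1 + ⋯ + λ_n ϖ_n` is a dominant integral weight: all `λ_j ≥ 0`. -/
def Dominant (n : ℕ) (lam : ℕ → ℤ) : Prop := ∀ j, 1 ≤ j → j ≤ n → 0 ≤ lam j

/-- `λ` is a regular dominant integral weight: all `λ_j > 0`. -/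
def RegularDominant (n : ℕ) (lam : ℕ → ℤ) : Prop := ∀ j, 1 ≤ j → j ≤ n → 0 < lam j

/-! ### Unimodular equivalence, Gelfand–Cetlin polytope, facets -/

/-- `P` and `Q` are unimodularly equivalent: `Q = M(P) + v` with `M ∈ GL(m, ℤ)`, `v ∈ ℤ^m`. -/
def UnimodEquiv {m : ℕ} (P Q : Set (Fin m → ℝ)) : Prop :=
  ∃ (M : Matrix (Fin m) (Fin m) ℤ) (v : Fin m → ℤ), IsUnit M.det ∧
    Q = (fun x i => (∑ j, (M i j : ℝ) * x j) + (v i : ℝ)) '' P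

/-- the entry `x_{k,j}` (`1 ≤ j ≤ k ≤ n+1`) of a Gelfand–Cetlin pattern, where the
top row is `x_{n+1,j} = λ_j + ⋯ + λ_n` and `x_{n+1,n+1} = 0`; the pair `(k, j)` is
encoded as the coordinate `k(k-1)/2 + (j-1)` of `ℝ^N`. -/
def gcX (n : ℕ) (lam : ℕ → ℤ) (x : Fin (Dim n) → ℝ) (k j : ℕ) : ℝ :=
  if k = n + 1 then (if j ≤ n then ∑ t ∈ Finset.Icc j n, (lam t : ℝ) else 0)
  else if h : k * (k - 1) / 2 + (j - 1) < Dim n then x ⟨k * (k - 1) / 2 + (j - 1), h⟩ else 0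

/-- the Gelfand–Cetlin polytope `GC(λ) ⊆ ℝ^N`. -/
def GCPolytope (n : ℕ) (lam : ℕ → ℤ) : Set (Fin (Dim n) → ℝ) :=
  {x | ∀ k j, 1 ≤ k → k ≤ n → 1 ≤ j → j ≤ k →
      gcX n lam x k j ≤ gcX n lam x (k + 1) j ∧
      gcX n lam x (k + 1) (j + 1) ≤ gcX n lam x k j}

/-- a face of a convex set: a convex extreme subset. -/
def IsFaceSet {m : ℕ} (S F : Set (Fin m → ℝ)) : Prop := IsExtreme ℝ S F ∧ Convex ℝ F

/-- a facet: a maximal proper face. -/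
def IsFacet {m : ℕ} (S F : Set (Fin m → ℝ)) : Prop :=
  IsFaceSet S F ∧ F ≠ S ∧ ∀ G, IsFaceSet S G → G ≠ S → F ⊆ G → F = G

/-- the number of facets. -/
def numFacets {m : ℕ} (S : Set (Fin m → ℝ)) : ℕ := {F | IsFacet S F}.ncard

/-- combinatorial equivalence: an inclusion-preserving bijection between face lattices. -/
def CombEquiv {m : ℕ} (S T : Set (Fin m → ℝ)) : Prop :=
  ∃ e : {F // IsFaceSet S F} ≃ {F // IsFaceSet T F},
    ∀ F G : {F // IsFaceSet S F}, F.1 ⊆ G.1 ↔ (e F).1 ⊆ (e G).1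

/-! ### Indices, contractions and extensions -/

/-- the `D`-index `ind_D(i) = |i_D^+|` for a decomposition `i ∼ i_D^- D_n i_D^+`
(independent of the decomposition). -/
def indD (n : ℕ) (w : List ℕ) : ℕ :=
  sInf {s | ∃ u v : List ℕ, v.length = s ∧ TwoMoveEquiv w (u ++ descWord n ++ v)}

/-- the `A`-index `ind_A(i) = |i_A^+|` for a decomposition `i ∼ i_A^- A_n i_A^+`. -/
def indA (n : ℕ) (w : List ℕ) : ℕ :=
  sInf {s | ∃ u v : List ℕ, v.length = s ∧ TwoMoveEquiv w (u ++ ascWord n ++ v)}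

/-- `w'` is a `D`-contraction `C_D(w) = i_D^- (i_D^+ - 1)` of `w ∈ Σ_{n+1}`. -/
def IsContractionD (n : ℕ) (w w' : List ℕ) : Prop :=
  ∃ u v : List ℕ, TwoMoveEquiv w (u ++ descWord n ++ v) ∧ w' = u ++ v.map (· - 1)

/-- `w'` is an `A`-contraction `C_A(w) = (i_A^- - 1) i_A^+` of `w ∈ Σ_{n+1}`. -/
def IsContractionA (n : ℕ) (w w' : List ℕ) : Prop :=
  ∃ u v : List ℕ, TwoMoveEquiv w (u ++ ascWord n ++ v) ∧ w' = u.map (· - 1) ++ v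

/-- the `D`-extension `E_D(s) : Σ_{n+1} → Σ_{n+2}`,
`i = i^-(s) i^+(s) ↦ i^-(s) D_{n+1} (i^+(s) + 1)` where `|i^+(s)| = s`. -/
def extD (n : ℕ) (s : ℕ) (w : List ℕ) : List ℕ :=
  w.take (w.length - s) ++ descWord (n + 1) ++ (w.drop (w.length - s)).map (· + 1)

/-- the `A`-extension `E_A(s) : Σ_{n+1} → Σ_{n+2}`,
`i = i^-(s) i^+(s) ↦ (i^-(s) + 1) A_{n+1} i^+(s)`. -/
def extA (n : ℕ) (s : ℕ) (w : List ℕ) : List ℕ :=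
  (w.take (w.length - s)).map (· + 1) ++ ascWord (n + 1) ++ w.drop (w.length - s)

/-- there exists `(σ_1, …, σ_n) ∈ {A, D}^n` (here `true = D`, `false = A`) such that
`ind_{σ_k}(C_{σ_{k+1}} ∘ ⋯ ∘ C_{σ_n}(i)) = 0` for all `k = n, …, 1`. -/
def SimplicialWord (n : ℕ) (w : List ℕ) : Prop :=
  ∃ (σ : ℕ → Bool) (c : ℕ → List ℕ), c n = w ∧
    ∀ k, 1 ≤ k → k ≤ n →
      (if σ k then IsContractionD k (c k) (c (k - 1)) ∧ indD k (c k) = 0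
       else IsContractionA k (c k) (c (k - 1)) ∧ indA k (c k) = 0)


/-- the `D`-coindex `coind_D(i) = |i_D^-|`. -/
def coindD (n : ℕ) (w : List ℕ) : ℕ :=
  sInf {s | ∃ u v : List ℕ, u.length = s ∧ TwoMoveEquiv w (u ++ descWord n ++ v)}

/-- the `A`-coindex `coind_A(i) = |i_A^-|`. -/
def coindA (n : ℕ) (w : List ℕ) : ℕ :=
  sInf {s | ∃ u v : List ℕ, u.length = s ∧ TwoMoveEquiv w (u ++ ascWord n ++ v)}

/-- the `a`-th (0-based) coordinate of a point of `ℝ^N`. -/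
def entry (n : ℕ) (t : Fin (Dim n) → ℝ) (a : ℕ) : ℝ :=
  if h : a < Dim n then t ⟨a, h⟩ else 0

/-- the product of cones
`t_1 ≥ 0`, `t_2 ≥ t_3 ≥ 0`, …, `t_{N-n+1} ≥ ⋯ ≥ t_N ≥ 0` (in `ℝ^N`, 1-based:
for `k = 1, …, n` the chain `t_{k(k-1)/2+1} ≥ ⋯ ≥ t_{k(k-1)/2+k} ≥ 0`). -/
def chainCone (n : ℕ) : Set (Fin (Dim n) → ℝ) :=
  {t | ∀ k j, 1 ≤ k → k ≤ n → 1 ≤ j → j ≤ k →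
    (if j = k then 0 else entry n t (k * (k - 1) / 2 + j)) ≤
      entry n t (k * (k - 1) / 2 + (j - 1))}

lemma sTrans_apply (a x : ℕ) :
    sTrans a x = if x = a then a + 1 else if x = a + 1 then a else x :=
  Equiv.swap_apply_def a (a + 1) x

@[simp] lemma wordProd_nil : wordProd [] = 1 := rfl

@[simp] lemma wordProd_cons (a : ℕ) (w : List ℕ) :
    wordProd (a :: w) = sTrans a * wordProd w := by
  simp [wordProd]

@[simp] lemma wordProd_append (x y : List ℕ) : wordProd (x ++ y) = wordProd x * wordProd y := by
  simp [wordProd]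

lemma longestPerm_apply (n x : ℕ) :
    longestPerm n x = if 1 ≤ x ∧ x ≤ n + 1 then n + 2 - x else x := rfl

lemma map_sub_one_map_add_one (l : List ℕ) : (l.map (· + 1)).map (· - 1) = l := by
  simp [List.map_map, Function.comp_def]

lemma map_add_one_map_sub_one {l : List ℕ} (hl : ∀ a ∈ l, 1 ≤ a) :
    (l.map (· - 1)).map (· + 1) = l := by
  rw [List.map_map]
  conv_rhs => rw [← List.map_id l]
  exact List.map_congr_left fun a ha => by have := hl a ha; simp; omega

lemma dim_succ (n : ℕ) : Dim (n + 1) = Dim n + (n + 1) := by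
  rw [Dim, Dim, show (n + 1) * (n + 1 + 1) = n * (n + 1) + (n + 1) * 2 by ring,
    Nat.add_mul_div_right _ _ two_pos]

def FarApart (a b : ℕ) : Prop := a + 1 < b ∨ b + 1 < a

lemma FarApart.symm {a b : ℕ} (h : FarApart a b) : FarApart b a := Or.symm h

lemma sTrans_mul_comm {a b : ℕ} (h : FarApart a b) :
    sTrans a * sTrans b = sTrans b * sTrans a := by
  ext x
  simp only [Equiv.Perm.mul_apply, sTrans_apply]
  unfold FarApart at h
  split_ifs <;> omega

local infix:50 " ∼ " => TwoMoveEquiv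

section TwoMoves

variable {w w' : List ℕ}

lemma TwoMoveStep.symm (h : TwoMoveStep w w') : TwoMoveStep w' w := by
  obtain ⟨u, v, a, b, hab, rfl, rfl⟩ := h
  exact ⟨u, v, b, a, hab.symm, rfl, rfl⟩

lemma TwoMoveStep.append (h : TwoMoveStep w w') (x y : List ℕ) :
    TwoMoveStep (x ++ w ++ y) (x ++ w' ++ y) := by
  obtain ⟨u, v, a, b, hab, rfl, rfl⟩ := h
  exact ⟨x ++ u, v ++ y, a, b, hab, by simp, by simp⟩

lemma TwoMoveStep.perm (h : TwoMoveStep w w') : w.Perm w' := by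
  obtain ⟨u, v, a, b, -, rfl, rfl⟩ := h
  exact (List.Perm.swap b a v).append_left u

lemma TwoMoveStep.wordProd_eq (h : TwoMoveStep w w') : wordProd w = wordProd w' := by
  obtain ⟨u, v, a, b, hab, rfl, rfl⟩ := h
  simp only [wordProd_append, wordProd_cons, ← mul_assoc, sTrans_mul_comm hab]

@[refl] lemma TwoMoveEquiv.refl (w : List ℕ) : w ∼ w := Relation.ReflTransGen.refl

lemma TwoMoveEquiv.of_eq (h : w = w') : w ∼ w' := h ▸ .refl w

lemma TwoMoveEquiv.single (h : TwoMoveStep w w') : w ∼ w' :=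
  Relation.ReflTransGen.single h

lemma TwoMoveEquiv.trans {w'' : List ℕ} (h : w ∼ w') (h' : w' ∼ w'') :
    w ∼ w'' :=
  Relation.ReflTransGen.trans h h'

instance : Trans TwoMoveEquiv TwoMoveEquiv TwoMoveEquiv := ⟨TwoMoveEquiv.trans⟩

lemma TwoMoveEquiv.symm (h : w ∼ w') : w' ∼ w := by
  induction h with
  | refl => exact .refl _
  | tail _ hs ih => exact (TwoMoveEquiv.single hs.symm).trans ih

lemma TwoMoveEquiv.append (h : w ∼ w') (x y : List ℕ) :
    x ++ w ++ y ∼ x ++ w' ++ y :=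
  Relation.ReflTransGen.lift (fun t => x ++ t ++ y) (fun _ _ hs => hs.append x y) _ _ h

lemma TwoMoveEquiv.append_left (h : w ∼ w') (x : List ℕ) :
    x ++ w ∼ x ++ w' := by
  simpa using h.append x []

lemma TwoMoveEquiv.append_right (h : w ∼ w') (y : List ℕ) :
    w ++ y ∼ w' ++ y := by
  simpa using h.append [] y

lemma TwoMoveEquiv.perm (h : w ∼ w') : w.Perm w' := by
  induction h with
  | refl => exact .refl _
  | tail _ hs ih => exact ih.trans hs.perm

lemma TwoMoveEquiv.wordProd_eq (h : w ∼ w') : wordProd w = wordProd w' := by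
  induction h with
  | refl => rfl
  | tail _ hs ih => exact ih.trans hs.wordProd_eq

lemma TwoMoveEquiv.forall_mem {p : ℕ → Prop} (h : w ∼ w') (hw : ∀ a ∈ w, p a) :
    ∀ a ∈ w', p a :=
  fun a ha => hw a (h.perm.mem_iff.2 ha)

lemma IsReduced.length_eq {m : ℕ} (hw : IsReduced m w) : w.length = Dim m := hw.1

lemma TwoMoveEquiv.isReduced {m : ℕ} (h : w ∼ w') (hw : IsReduced m w) :
    IsReduced m w' :=
  ⟨h.perm.length_eq ▸ hw.1, h.forall_mem hw.2.1, h.wordProd_eq ▸ hw.2.2⟩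

end TwoMoves

section Commuting

lemma twoMoveEquiv_cons_append {a : ℕ} {y : List ℕ} (h : ∀ b ∈ y, FarApart a b) :
    a :: y ∼ y ++ [a] := by
  induction y with
  | nil => rfl
  | cons b y ih =>
    have hab : TwoMoveStep (a :: b :: y) (b :: a :: y) := ⟨[], y, a, b, h b (by simp), rfl, rfl⟩
    exact (TwoMoveEquiv.single hab).trans
      ((ih fun c hc => h c (by simp [hc])).append_left [b])

lemma twoMoveEquiv_append_comm {x y : List ℕ} (h : ∀ a ∈ x, ∀ b ∈ y, FarApart a b) :
    x ++ y ∼ y ++ x := by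
  induction x with
  | nil => simp [TwoMoveEquiv.refl]
  | cons a x ih =>
    have h₁ := (ih fun c hc => h c (by simp [hc])).append_left [a]
    have h₂ := (twoMoveEquiv_cons_append (h a (by simp))).append_right x
    simp only [List.cons_append, List.append_assoc] at h₁ h₂ ⊢
    exact h₁.trans h₂

lemma twoMoveEquiv_filter_append_filter (p : ℕ → Bool) {x : List ℕ}
    (h : ∀ a ∈ x, ∀ b ∈ x, p a → ¬ p b → FarApart a b) :
    x ∼ x.filter p ++ x.filter (fun a => !p a) := by
  induction x with
  | nil => rfl
  | cons a x ih =>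
    have ih' := (ih fun c hc b hb => h c (by simp [hc]) b (by simp [hb])).append_left [a]
    by_cases hpa : p a
    · simpa [List.filter_cons, hpa] using ih'
    · have hcomm : a :: x.filter p ∼ x.filter p ++ [a] :=
        twoMoveEquiv_cons_append fun b hb =>
          (h b (by simp [(List.mem_filter.1 hb).1]) a (by simp) (List.mem_filter.1 hb).2 hpa).symm
      have := ih'.trans (hcomm.append_right (x.filter fun a => !p a))
      simpa [List.filter_cons, hpa] using this

lemma twoMoveEquiv_gather {d x : List ℕ} {b : ℕ} (hd : ∀ c ∈ d, b < c)
    (hx : ∀ c ∈ x, c ≠ b ∧ c ≠ b + 1) :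
    d ++ x ++ [b] ∼
      (x.filter (· < b) ++ (d ++ [b]) ++ x.filter (fun c => !decide (c < b))) := by
  set lo := x.filter (· < b)
  set hi := x.filter (fun c => !decide (c < b))
  have hlo : ∀ c ∈ lo, c < b := fun c hc => by simpa using (List.mem_filter.1 hc).2
  have hhi : ∀ c ∈ hi, b + 1 < c := fun c hc => by
    have := hx c (List.mem_filter.1 hc).1
    have := (List.mem_filter.1 hc).2
    simp only [Bool.not_eq_eq_eq_not, Bool.not_true, decide_eq_false_iff_not] at this
    omega
  have hsplit : x ∼ lo ++ hi :=
    twoMoveEquiv_filter_append_filter _ fun a ha c hc hpa hpc => by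
      have := hx c hc
      simp only [decide_eq_true_eq] at hpa
      simp only [decide_eq_true_eq] at hpc
      left; omega
  have hdlo : d ++ lo ∼ lo ++ d :=
    twoMoveEquiv_append_comm fun c hc a ha => Or.inr (by have := hd c hc; have := hlo a ha; omega)
  have hhib : hi ++ [b] ∼ b :: hi :=
    (twoMoveEquiv_cons_append fun c hc => Or.inl (hhi c hc)).symm
  calc d ++ x ++ [b] ∼ d ++ (lo ++ hi) ++ [b] := hsplit.append d [b]
    _ = (d ++ lo) ++ (hi ++ [b]) := by simp
    _ ∼ (lo ++ d) ++ (hi ++ [b]) := hdlo.append_right _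
    _ ∼ (lo ++ d) ++ (b :: hi) := hhib.append_left _
    _ = lo ++ (d ++ [b]) ++ hi := by simp
end Commuting

section Runs

def descRun : ℕ → ℕ → List ℕ
  | _, 0 => []
  | d, k + 1 => d :: descRun (d - 1) k

lemma descRun_add (d k l : ℕ) : descRun d (k + l) = descRun d k ++ descRun (d - k) l := by
  induction k generalizing d with
  | zero => simp [descRun]
  | succ k ih =>
    rw [Nat.add_right_comm, descRun, ih, descRun, Nat.sub_add_eq, Nat.sub_right_comm]
    rfl

lemma descRun_succ (d k : ℕ) : descRun d (k + 1) = descRun d k ++ [d - k] := by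
  rw [descRun_add]; rfl

lemma mem_descRun {d k a : ℕ} (hk : k ≤ d) (ha : a ∈ descRun d k) :
    d - k < a ∧ a ≤ d := by
  induction k generalizing d with
  | zero => simp [descRun] at ha
  | succ k ih =>
    rcases List.mem_cons.1 ha with rfl | ha
    · omega
    · have := ih (by omega) ha; omega

lemma descWord_succ (m : ℕ) : descWord (m + 1) = (m + 1) :: descWord m := by
  simp [descWord, ascWord, List.range_succ]

lemma descWord_eq_descRun (m : ℕ) : descWord m = descRun m m := by
  induction m with
  | zero => rfl
  | succ m ih => rw [descWord_succ, ih]; rfl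

lemma mem_descWord {m a : ℕ} (ha : a ∈ descWord m) : 1 ≤ a ∧ a ≤ m := by
  rw [descWord_eq_descRun] at ha
  have := mem_descRun le_rfl ha
  omega

@[simp] lemma length_descWord (m : ℕ) : (descWord m).length = m := by simp [descWord, ascWord]

lemma wordProd_descWord_apply (m x : ℕ) :
    wordProd (descWord m) x = if x = 1 then m + 1 else if x ≤ m + 1 then x - 1 else x := by
  induction m generalizing x with
  | zero => simp [descWord, ascWord]; split_ifs <;> omega
  | succ m ih =>
    rw [descWord_succ, wordProd_cons, Equiv.Perm.mul_apply, ih x]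
    simp only [sTrans_apply]
    split_ifs <;> omega

lemma longestPerm_succ (n : ℕ) :
    longestPerm (n + 1) = longestPerm n * wordProd (descWord (n + 1)) := by
  ext x
  simp only [Equiv.Perm.mul_apply, wordProd_descWord_apply, longestPerm_apply]
  split_ifs <;> omega

lemma wordProd_descWord_mul {m : ℕ} {x : List ℕ} (hx : ∀ a ∈ x, 1 ≤ a ∧ a < m) :
    wordProd (descWord m) * wordProd (x.map (· + 1)) = wordProd x * wordProd (descWord m) := by
  induction x with
  | nil => simp
  | cons a x ih =>
    have hconj : wordProd (descWord m) * sTrans (a + 1) = sTrans a * wordProd (descWord m) := by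
      have := hx a (by simp)
      ext y
      simp only [Equiv.Perm.mul_apply, wordProd_descWord_apply, sTrans_apply]
      split_ifs <;> omega
    simp only [List.map_cons, wordProd_cons, ← mul_assoc, hconj]
    rw [mul_assoc, ih fun b hb => hx b (by simp [hb]), mul_assoc]

end Runs

section Wires

/-- The column reached by the wire that starts in column `c`, after the crossings of `w`. -/
def wirePos (c : ℕ) (w : List ℕ) : ℕ := w.foldl (fun c a => sTrans a c) c

/-- The word of the wiring diagram of `w` with the wire starting in column `c` removed:
crossings on that wire disappear, crossings to its right move one column to the left. -/
def deleteWire : ℕ → List ℕ → List ℕ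
  | _, [] => []
  | c, a :: w =>
    if c = a ∨ c = a + 1 then deleteWire (sTrans a c) w
    else (if c < a then a - 1 else a) :: deleteWire c w

def numRightOf : ℕ → List ℕ → ℕ
  | _, [] => 0
  | c, a :: w =>
    if c = a ∨ c = a + 1 then numRightOf (sTrans a c) w
    else (if c < a then 1 else 0) + numRightOf c w

@[simp] lemma wirePos_nil (c : ℕ) : wirePos c [] = c := rfl

@[simp] lemma wirePos_cons (c a : ℕ) (w : List ℕ) :
    wirePos c (a :: w) = wirePos (sTrans a c) w := rfl

@[simp] lemma wirePos_append (c : ℕ) (x y : List ℕ) :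
    wirePos c (x ++ y) = wirePos (wirePos c x) y := List.foldl_append ..

lemma wirePos_eq_symm (c : ℕ) (w : List ℕ) : wirePos c w = (wordProd w).symm c := by
  induction w generalizing c with
  | nil => rfl
  | cons a w ih =>
    rw [wirePos_cons, ih, wordProd_cons, Equiv.Perm.mul_def, Equiv.symm_trans_apply]
    rfl

lemma sTrans_of_ne {a c : ℕ} (h : ¬(c = a ∨ c = a + 1)) : sTrans a c = c :=
  Equiv.swap_apply_of_ne_of_ne (fun h' => h (.inl h')) (fun h' => h (.inr h'))

lemma wirePos_of_forall {c : ℕ} {w : List ℕ} (h : ∀ a ∈ w, ¬(c = a ∨ c = a + 1)) :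
    wirePos c w = c := by
  induction w with
  | nil => rfl
  | cons a w ih =>
    rw [wirePos_cons, sTrans_of_ne (h a (by simp))]
    exact ih fun b hb => h b (by simp [hb])

lemma wirePos_mem_Icc {M c : ℕ} {w : List ℕ} (hw : ∀ a ∈ w, 1 ≤ a ∧ a < M)
    (hc : 1 ≤ c ∧ c ≤ M) : 1 ≤ wirePos c w ∧ wirePos c w ≤ M := by
  induction w generalizing c with
  | nil => exact hc
  | cons a w ih =>
    refine ih (fun b hb => hw b (by simp [hb])) ?_
    have := hw a (by simp)
    show 1 ≤ sTrans a c ∧ sTrans a c ≤ M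
    rw [sTrans_apply]
    split_ifs <;> omega

lemma exists_first_crossing {c : ℕ} {w : List ℕ} (hw : wirePos c w ≠ c) :
    ∃ x b y, w = x ++ b :: y ∧ (∀ a ∈ x, ¬(c = a ∨ c = a + 1)) ∧
      (c = b ∨ c = b + 1) := by
  induction w with
  | nil => exact absurd rfl hw
  | cons a w ih =>
    by_cases ha : c = a ∨ c = a + 1
    · exact ⟨[], a, w, rfl, by simp, ha⟩
    · rw [wirePos_cons, sTrans_of_ne ha] at hw
      obtain ⟨x, b, y, rfl, hx, hb⟩ := ih hw
      refine ⟨a :: x, b, y, rfl, ?_, hb⟩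
      exact List.forall_mem_cons.2 ⟨ha, hx⟩

lemma deleteWire_append (c : ℕ) (x y : List ℕ) :
    deleteWire c (x ++ y) = deleteWire c x ++ deleteWire (wirePos c x) y ∧
      numRightOf c (x ++ y) = numRightOf c x + numRightOf (wirePos c x) y := by
  induction x generalizing c with
  | nil => simp [deleteWire, numRightOf]
  | cons a x ih =>
    by_cases h : c = a ∨ c = a + 1
    · simp only [List.cons_append, deleteWire, numRightOf, if_pos h, wirePos_cons, ih, and_self]
    · simp only [List.cons_append, deleteWire, numRightOf, if_neg h, wirePos_cons,
        sTrans_of_ne h, ih, List.cons_append, Nat.add_assoc, and_self]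

lemma deleteWire_of_left {c : ℕ} {x : List ℕ} (h : ∀ a ∈ x, a + 1 < c) :
    deleteWire c x = x ∧ numRightOf c x = 0 ∧ wirePos c x = c := by
  induction x with
  | nil => simp [deleteWire, numRightOf]
  | cons a x ih =>
    have ha : ¬(c = a ∨ c = a + 1) := by have := h a (by simp); omega
    obtain ⟨h₁, h₂, h₃⟩ := ih fun b hb => h b (by simp [hb])
    simp only [deleteWire, numRightOf, if_neg ha, wirePos_cons, sTrans_of_ne ha, h₁, h₂, h₃]
    have := h a (by simp)
    simp [show ¬c < a by omega]

lemma deleteWire_of_right {c : ℕ} {x : List ℕ} (h : ∀ a ∈ x, c < a) :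
    deleteWire c x = x.map (· - 1) ∧ numRightOf c x = x.length ∧ wirePos c x = c := by
  induction x with
  | nil => simp [deleteWire, numRightOf]
  | cons a x ih =>
    have hca := h a (by simp)
    have ha : ¬(c = a ∨ c = a + 1) := by omega
    obtain ⟨h₁, h₂, h₃⟩ := ih fun b hb => h b (by simp [hb])
    simp only [deleteWire, numRightOf, if_neg ha, if_pos hca, wirePos_cons, sTrans_of_ne ha,
      h₁, h₂, h₃, List.map_cons, List.length_cons, true_and, and_true]
    omega

lemma deleteWire_descRun {d k : ℕ} (hk : k ≤ d) :
    deleteWire (d + 1) (descRun d k) = [] ∧ numRightOf (d + 1) (descRun d k) = 0 ∧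
      wirePos (d + 1) (descRun d k) = d + 1 - k := by
  induction k generalizing d with
  | zero => simp [descRun, deleteWire, numRightOf]
  | succ k ih =>
    have hs : sTrans d (d + 1) = d - 1 + 1 := by rw [sTrans_apply]; split_ifs <;> omega
    obtain ⟨h₁, h₂, h₃⟩ := ih (d := d - 1) (by omega)
    simp only [descRun, deleteWire, numRightOf, or_true, ↓reduceIte, wirePos_cons, hs,
      h₁, h₂, h₃, true_and]
    omega

end Wires

section Invariance

/-- A wire crossed by `a` is not crossed by a far letter `b`, neither before nor after. -/
lemma deleteWire_swap_of_crosses {c a b : ℕ} (v : List ℕ) (hab : FarApart a b)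
    (hc : c = a ∨ c = a + 1) :
    deleteWire c (a :: b :: v) = deleteWire c (b :: a :: v) ∧
      numRightOf c (a :: b :: v) = numRightOf c (b :: a :: v) := by
  unfold FarApart at hab
  have hcb : ¬(c = b ∨ c = b + 1) := by omega
  have hsa : sTrans a c = a ∨ sTrans a c = a + 1 := by rw [sTrans_apply]; split_ifs <;> omega
  have hsb : ¬(sTrans a c = b ∨ sTrans a c = b + 1) := by omega
  have hlt : (sTrans a c < b ↔ c < b) := by omega
  simp only [deleteWire, numRightOf, if_pos hc, if_neg hcb, if_neg hsb, sTrans_of_ne hcb,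
    if_congr hlt rfl rfl, and_self]

lemma TwoMoveStep.deleteWire {w w' : List ℕ} (h : TwoMoveStep w w') (c : ℕ) :
    deleteWire c w ∼ deleteWire c w' ∧ numRightOf c w = numRightOf c w' := by
  obtain ⟨u, v, a, b, hab, rfl, rfl⟩ := h
  induction u generalizing c with
  | nil =>
    simp only [List.nil_append]
    by_cases hca : c = a ∨ c = a + 1
    · obtain ⟨h₁, h₂⟩ := deleteWire_swap_of_crosses v hab hca
      exact ⟨.of_eq h₁, h₂⟩
    by_cases hcb : c = b ∨ c = b + 1
    · obtain ⟨h₁, h₂⟩ := deleteWire_swap_of_crosses v hab.symm hcb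
      exact ⟨.of_eq h₁.symm, h₂.symm⟩
    simp only [StringPolytope.deleteWire, numRightOf, if_neg hca, if_neg hcb]
    refine ⟨.single ⟨[], _, _, _, ?_, rfl, rfl⟩, by omega⟩
    split_ifs <;> omega
  | cons d u ih =>
    by_cases hcd : c = d ∨ c = d + 1
    · simpa only [List.cons_append, StringPolytope.deleteWire, numRightOf, if_pos hcd]
        using ih (sTrans d c)
    · simp only [List.cons_append, StringPolytope.deleteWire, numRightOf, if_neg hcd]
      obtain ⟨h₁, h₂⟩ := ih c
      exact ⟨h₁.append_left [_], by rw [h₂]⟩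

lemma TwoMoveEquiv.deleteWire {w w' : List ℕ} (h : w ∼ w') (c : ℕ) :
    deleteWire c w ∼ deleteWire c w' ∧ numRightOf c w = numRightOf c w' := by
  induction h with
  | refl => exact ⟨.refl _, rfl⟩
  | tail _ hs ih =>
    obtain ⟨h₁, h₂⟩ := hs.deleteWire c
    exact ⟨ih.1.trans h₁, ih.2.trans h₂⟩

end Invariance

section Inversions

lemma sTrans_symm (a : ℕ) : (sTrans a).symm = sTrans a := Equiv.symm_swap ..

lemma sTrans_mul_self (a : ℕ) : sTrans a * sTrans a = 1 := Equiv.swap_mul_self ..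

def inversions (M : ℕ) (p : Equiv.Perm ℕ) : Finset (ℕ × ℕ) :=
  {q ∈ Finset.Icc 1 M ×ˢ Finset.Icc 1 M | q.1 < q.2 ∧ p q.2 < p q.1}

lemma card_inversions_mul_sTrans {M a : ℕ} (p : Equiv.Perm ℕ) (ha : 1 ≤ a ∧ a < M)
    (h : p a < p (a + 1)) : (inversions M (p * sTrans a)).card = (inversions M p).card + 1 := by
  let s := (sTrans a).prodCongr (sTrans a)
  have hs : inversions M (p * sTrans a) =
      (insert (a + 1, a) (inversions M p)).map s.toEmbedding := by
    ext ⟨x, y⟩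
    simp only [inversions, Finset.mem_map_equiv, Finset.mem_insert, Finset.mem_filter,
      Finset.mem_product, Finset.mem_Icc, Equiv.Perm.mul_apply, s, Equiv.prodCongr_symm,
      Equiv.prodCongr_apply, Prod.map, Prod.mk.injEq, sTrans_symm, sTrans_apply]
    split_ifs <;> subst_vars <;> omega
  rw [hs, Finset.card_map, Finset.card_insert_of_notMem (by simp [inversions])]

lemma card_inversions_mul_sTrans_of_gt {M a : ℕ} (p : Equiv.Perm ℕ) (ha : 1 ≤ a ∧ a < M)
    (h : p (a + 1) < p a) : (inversions M (p * sTrans a)).card + 1 = (inversions M p).card := by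
  have := card_inversions_mul_sTrans (p * sTrans a) ha (by simpa [sTrans_apply] using h)
  rwa [mul_assoc, sTrans_mul_self, mul_one, eq_comm] at this

lemma card_inversions_mul_sTrans_le {M a : ℕ} (p : Equiv.Perm ℕ) (ha : 1 ≤ a ∧ a < M) :
    (inversions M (p * sTrans a)).card ≤ (inversions M p).card + 1 := by
  rcases lt_or_gt_of_ne (p.injective.ne (show a ≠ a + 1 by omega)) with h | h
  · exact (card_inversions_mul_sTrans p ha h).le
  · have := card_inversions_mul_sTrans_of_gt p ha h
    omega

lemma card_inversions_mul_wordProd_le {M : ℕ} (p : Equiv.Perm ℕ) {w : List ℕ}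
    (hw : ∀ a ∈ w, 1 ≤ a ∧ a < M) :
    (inversions M (p * wordProd w)).card ≤ (inversions M p).card + w.length := by
  induction w generalizing p with
  | nil => simp
  | cons a w ih =>
    have h₁ := ih (p * sTrans a) fun b hb => hw b (by simp [hb])
    have h₂ := card_inversions_mul_sTrans_le p (hw a (by simp))
    rw [wordProd_cons, ← mul_assoc, List.length_cons]
    omega

lemma card_inversions_longestPerm (m : ℕ) :
    (inversions (m + 1) (longestPerm m)).card = Dim m := by
  have : inversions (m + 1) (longestPerm m) =
      {q ∈ Finset.Icc 1 (m + 1) ×ˢ Finset.Icc 1 (m + 1) | q.1 < q.2} := by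
    refine Finset.filter_congr fun q hq => ?_
    simp only [Finset.mem_product, Finset.mem_Icc] at hq
    simp only [longestPerm_apply]
    split_ifs <;> omega
  rw [this, Finset.card_product_filter_lt, Nat.card_Icc, Nat.choose_two_right, Dim]
  simp [Nat.mul_comm]

/-- A letter can change the number of inversions by at most one, and `w₀` has as many
inversions as a reduced word has letters: so no letter of a reduced word removes one. -/
lemma IsReduced.wordProd_lt_of_eq_append {m a : ℕ} {w x y : List ℕ} (hw : IsReduced m w)
    (hs : w = x ++ a :: y) : wordProd x a < wordProd x (a + 1) := by
  obtain ⟨hlen, hlet, hprod⟩ := hw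
  subst hs
  have hlet' : ∀ b ∈ x ++ a :: y, 1 ≤ b ∧ b < m + 1 := fun b hb => by
    have := hlet b hb; omega
  have hx := card_inversions_mul_wordProd_le 1 (w := x) fun b hb => hlet' b (by simp [hb])
  have hy := card_inversions_mul_wordProd_le (wordProd x * sTrans a) (w := y)
    fun b hb => hlet' b (by simp [hb])
  have htot := card_inversions_longestPerm m
  have hone : inversions (m + 1) 1 = ∅ := by
    refine Finset.filter_false_of_mem fun q _ h => ?_
    simp only [Equiv.Perm.one_apply] at h
    omega
  rw [← hprod, wordProd_append, wordProd_cons, ← mul_assoc] at htot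
  rw [one_mul, hone] at hx
  simp only [List.length_append, List.length_cons] at hlen
  by_contra hlt
  have := card_inversions_mul_sTrans_of_gt (wordProd x) (hlet' a (by simp))
    (lt_of_le_of_ne (not_lt.1 hlt) ((wordProd x).injective.ne (by omega)))
  simp only [Finset.card_empty, Dim] at hx htot
  omega

end Inversions

section LastWire

variable {m : ℕ} {w : List ℕ}

/-- The wire starting in the last column carries the largest label, so crossing to the right
would remove an inversion. -/
lemma IsReduced.wirePos_ne {x y : List ℕ} {a : ℕ} (hw : IsReduced m w) (hs : w = x ++ a :: y) :
    wirePos (m + 1) x ≠ a := by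
  intro hxa
  have hlt := hw.wordProd_lt_of_eq_append hs
  have ha := hw.2.1 a (by simp [hs])
  have hxm : wordProd x a = m + 1 := by
    rw [← hxa, wirePos_eq_symm, Equiv.apply_symm_apply]
  set d := wordProd x (a + 1)
  have hfix : wirePos d x = d := wirePos_of_forall fun b hb => by
    have := hw.2.1 b (by simp [hs, hb]); omega
  rw [wirePos_eq_symm, Equiv.symm_apply_apply] at hfix
  omega

lemma IsReduced.wirePos_append_le {x y z : List ℕ} (hw : IsReduced m w) (hs : w = x ++ y ++ z) :
    wirePos (m + 1) (x ++ y) ≤ wirePos (m + 1) x := by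
  induction y generalizing x with
  | nil => simp
  | cons b y ih =>
    have hne := hw.wirePos_ne (x := x) (a := b) (y := y ++ z) (by simp [hs])
    have hstep : sTrans b (wirePos (m + 1) x) ≤ wirePos (m + 1) x := by
      rw [sTrans_apply]; split_ifs <;> omega
    have := ih (x := x ++ [b]) (by simp [hs])
    simp only [wirePos_append, wirePos_cons, wirePos_nil, List.append_assoc,
      List.cons_append, List.nil_append] at this ⊢
    omega

lemma IsReduced.wirePos_eq_one (hw : IsReduced m w) : wirePos (m + 1) w = 1 := by
  rw [wirePos_eq_symm, hw.2.2, Equiv.symm_apply_eq, longestPerm_apply]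
  simp

lemma IsReduced.wirePos_mem_Icc (hw : IsReduced m w) (x : List ℕ) (hx : x <+: w) :
    1 ≤ wirePos (m + 1) x ∧ wirePos (m + 1) x ≤ m + 1 :=
  StringPolytope.wirePos_mem_Icc (fun a ha => by have := hw.2.1 a (hx.subset ha); omega) (by omega)

end LastWire

section Decomposition

variable {m : ℕ}

lemma wirePos_descWord (m : ℕ) : wirePos (m + 1) (descWord m) = 1 := by
  rw [descWord_eq_descRun, (deleteWire_descRun le_rfl).2.2]
  omega

/-- In a reduced decomposition `u D_m v`, the wire from the last column crosses nothing
outside `D_m`. -/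
lemma IsReduced.forall_mem_of_descWord {u v : List ℕ} (h : IsReduced m (u ++ descWord m ++ v)) :
    (∀ a ∈ u, a < m) ∧ ∀ a ∈ v, 1 < a := by
  -- Had the wire left the last column before `D_m`, the letter of `D_m` at its column
  -- would push it to the right.
  have hu : wirePos (m + 1) u = m + 1 := by
    by_contra hne
    set c := wirePos (m + 1) u
    have hc := h.wirePos_mem_Icc u (by simp [List.append_assoc])
    have hD : descWord m = descRun m (m - c) ++ c :: descRun (c - 1) (c - 1) := by
      have hadd := descRun_add m (m - c) c
      rw [show m - c + c = m by omega, show m - (m - c) = c by omega] at hadd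
      obtain ⟨c', hc'⟩ : ∃ c', c = c' + 1 := ⟨c - 1, by omega⟩
      rw [descWord_eq_descRun, hadd, hc']
      rfl
    have hpos : wirePos (m + 1) (u ++ descRun m (m - c)) = c := by
      rw [wirePos_append]
      exact wirePos_of_forall fun a ha => by have := mem_descRun (by omega) ha; omega
    exact h.wirePos_ne (y := descRun (c - 1) (c - 1) ++ v) (by rw [hD]; simp) hpos
  refine ⟨fun a ha => ?_, fun a ha => ?_⟩
  · obtain ⟨u₁, u₂, rfl⟩ := List.append_of_mem ha
    have h₁ := h.wirePos_append_le (x := u₁ ++ [a]) (y := u₂) (z := descWord m ++ v) (by simp)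
    have h₂ := h.wirePos_append_le (x := u₁) (y := [a]) (z := u₂ ++ descWord m ++ v) (by simp)
    have h₃ := h.wirePos_mem_Icc u₁ (by simp [List.append_assoc])
    have ha := h.2.1 a (by simp)
    simp only [List.append_assoc, List.singleton_append, hu, wirePos_append, wirePos_cons,
      wirePos_nil] at h₁ h₂
    rw [sTrans_apply] at h₁ h₂
    split_ifs at h₁ h₂ <;> omega
  · obtain ⟨v₁, v₂, rfl⟩ := List.append_of_mem ha
    have h₁ := h.wirePos_append_le (x := u ++ descWord m) (y := v₁) (z := a :: v₂) (by simp)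
    have h₂ := h.wirePos_mem_Icc (u ++ descWord m ++ v₁) (by simp [List.append_assoc])
    have h₃ := h.wirePos_ne (x := u ++ descWord m ++ v₁) (a := a) (y := v₂) (by simp)
    have ha := h.2.1 a (by simp)
    rw [wirePos_append (x := u), hu, wirePos_descWord] at h₁
    omega

lemma IsReduced.deleteWire_of_descWord {u v : List ℕ} (h : IsReduced m (u ++ descWord m ++ v)) :
    deleteWire (m + 1) (u ++ descWord m ++ v) = u ++ v.map (· - 1) ∧
      numRightOf (m + 1) (u ++ descWord m ++ v) = v.length := by
  obtain ⟨hu, hv⟩ := h.forall_mem_of_descWord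
  obtain ⟨hu₁, hu₂, hu₃⟩ := deleteWire_of_left (c := m + 1) (x := u) fun a ha => by
    have := hu a ha; omega
  obtain ⟨hD₁, hD₂, hD₃⟩ := deleteWire_descRun (d := m) le_rfl
  obtain ⟨hv₁, hv₂, -⟩ := deleteWire_of_right (c := 1) hv
  rw [← descWord_eq_descRun] at hD₁ hD₂
  simp only [deleteWire_append, wirePos_append, hu₁, hu₂, hu₃, hD₁, hD₂, wirePos_descWord,
    hv₁, hv₂, List.append_nil, zero_add, and_self]

lemma IsReduced.exists_descWord {w : List ℕ} (hw : IsReduced m w) :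
    ∃ u v, w ∼ u ++ descWord m ++ v := by
  suffices ∀ k ≤ m, ∃ u v, w ∼ u ++ descRun m k ++ v ∧ wirePos (m + 1) u = m + 1 by
    obtain ⟨u, v, h, -⟩ := this m le_rfl
    exact ⟨u, v, descWord_eq_descRun m ▸ h⟩
  intro k
  induction k with
  | zero => exact fun _ => ⟨[], w, .of_eq (by simp [descRun]), rfl⟩
  | succ k ih =>
    intro hk
    obtain ⟨u, v, hwuv, hu⟩ := ih (by omega)
    have hred := hwuv.isReduced hw
    have hpos : wirePos (m + 1) (u ++ descRun m k) = m + 1 - k := by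
      rw [wirePos_append, hu, (deleteWire_descRun (by omega)).2.2]
    have hv : wirePos (m + 1 - k) v ≠ m + 1 - k := by
      have := hred.wirePos_eq_one
      rw [wirePos_append, hpos] at this
      omega
    obtain ⟨x, b, y, rfl, hx, hb⟩ := exists_first_crossing hv
    have hxpos : wirePos (m + 1) (u ++ descRun m k ++ x) = m + 1 - k := by
      rw [wirePos_append, hpos, wirePos_of_forall hx]
    have hbk : b = m - k := by
      have := hred.wirePos_ne (x := u ++ descRun m k ++ x) (a := b) (y := y) (by simp)
      omega
    have hgather := twoMoveEquiv_gather (d := descRun m k) (x := x) (b := b)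
      (fun c hc => by have := mem_descRun (by omega) hc; omega)
      (fun c hc => by have := hx c hc; omega)
    refine ⟨u ++ x.filter (· < b), x.filter (fun c => !decide (c < b)) ++ y, ?_, ?_⟩
    · calc w ∼ u ++ descRun m k ++ (x ++ b :: y) := hwuv
        _ = u ++ (descRun m k ++ x ++ [b]) ++ y := by simp
        _ ∼ _ := hgather.append u y
        _ = _ := by rw [descRun_succ, hbk]; simp
    · rw [wirePos_append, hu]
      refine wirePos_of_forall fun c hc => ?_
      have := (List.mem_filter.1 hc).2
      simp only [decide_eq_true_eq] at this
      omega

end Decomposition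

section DContraction

variable {n m : ℕ} {w i j : List ℕ}

@[simp] lemma length_extD (n s : ℕ) (i : List ℕ) :
    (extD n s i).length = i.length + (n + 1) := by
  simp only [extD, List.length_append, List.length_map, length_descWord, List.length_take,
    List.length_drop]
  omega

lemma extD_length_map_sub {u v : List ℕ} (hv : ∀ a ∈ v, 1 ≤ a) :
    extD n v.length (u ++ v.map (· - 1)) = u ++ descWord (n + 1) ++ v := by
  have hlen : (u ++ v.map (· - 1)).length - v.length = u.length := by simp
  rw [extD, hlen, List.take_left' rfl, List.drop_left' rfl, map_add_one_map_sub_one hv]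

lemma isContractionD_extD (n s : ℕ) (i : List ℕ) : IsContractionD (n + 1) (extD n s i) i :=
  ⟨_, _, .refl _, by rw [map_sub_one_map_add_one, List.take_append_drop]⟩

lemma wordProd_extD (s : ℕ) (hi : ∀ a ∈ i, 1 ≤ a ∧ a ≤ n) :
    wordProd (extD n s i) = wordProd i * wordProd (descWord (n + 1)) := by
  rw [extD, wordProd_append, wordProd_append, mul_assoc,
    wordProd_descWord_mul fun a ha => by have := hi a (List.mem_of_mem_drop ha); omega,
    ← mul_assoc, ← wordProd_append, List.take_append_drop]

lemma isReduced_extD (hi : IsReduced n i) (s : ℕ) : IsReduced (n + 1) (extD n s i) := by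
  refine ⟨?_, fun a ha => ?_, ?_⟩
  · show _ = Dim (n + 1)
    rw [length_extD, hi.length_eq, dim_succ]
  · simp only [StringPolytope.extD, List.mem_append, List.mem_map] at ha
    rcases ha with (ha | ha) | ⟨b, hb, rfl⟩
    · have := hi.2.1 a (List.mem_of_mem_take ha); omega
    · exact mem_descWord ha
    · have := hi.2.1 b (List.mem_of_mem_drop hb); omega
  · rw [wordProd_extD s hi.2.1, hi.2.2, longestPerm_succ]

lemma IsReduced.indD_eq {u v : List ℕ} (hw : IsReduced m w) (h : w ∼ u ++ descWord m ++ v) :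
    indD m w = v.length := by
  have key : ∀ u' v', w ∼ u' ++ descWord m ++ v' → v'.length = numRightOf (m + 1) w :=
    fun u' v' h' => by rw [(h'.deleteWire _).2, (h'.isReduced hw).deleteWire_of_descWord.2]
  have hset : {s | ∃ u' v' : List ℕ, v'.length = s ∧ w ∼ u' ++ descWord m ++ v'} =
      {numRightOf (m + 1) w} := by
    ext s
    simp only [Set.mem_ofPred_eq, Set.mem_singleton_iff]
    exact ⟨fun ⟨u', v', hs, h'⟩ => hs ▸ key u' v' h',
      fun hs => ⟨u, v, hs ▸ key u v h, h⟩⟩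
  rw [indD, hset, csInf_singleton, key u v h]

lemma IsReduced.indD_extD (hi : IsReduced n i) {s : ℕ} (hs : s ≤ Dim n) :
    indD (n + 1) (extD n s i) = s := by
  rw [(isReduced_extD hi s).indD_eq (.refl _), List.length_map, List.length_drop, hi.length_eq]
  omega

lemma IsContractionD.deleteWire_twoMoveEquiv (hw : IsReduced m w) (hj : IsContractionD m w j) :
    deleteWire (m + 1) w ∼ j := by
  obtain ⟨u, v, h, rfl⟩ := hj
  have := (h.deleteWire (m + 1)).1
  rwa [(h.isReduced hw).deleteWire_of_descWord.1] at this

lemma IsContractionD.twoMoveEquiv {j' : List ℕ} (hw : IsReduced m w) (hj : IsContractionD m w j)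
    (hj' : IsContractionD m w j') : j ∼ j' :=
  (hj.deleteWire_twoMoveEquiv hw).symm.trans (hj'.deleteWire_twoMoveEquiv hw)

lemma IsContractionD.extD_indD (hw : IsReduced (n + 1) w) (hj : IsContractionD (n + 1) w j) :
    extD n (indD (n + 1) w) j ∼ w := by
  obtain ⟨u, v, h, rfl⟩ := hj
  rw [hw.indD_eq h, extD_length_map_sub fun a ha => (h.isReduced hw).2.1 a (by simp [ha]) |>.1]
  exact h.symm

lemma IsContractionD.isReduced (hw : IsReduced (n + 1) w) (hj : IsContractionD (n + 1) w j) :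
    IsReduced n j := by
  obtain ⟨u, v, h, rfl⟩ := hj
  have hred := h.isReduced hw
  obtain ⟨hu, hv⟩ := hred.forall_mem_of_descWord
  have hlet : ∀ a ∈ u ++ v.map (· - 1), 1 ≤ a ∧ a ≤ n := by
    intro a ha
    simp only [List.mem_append, List.mem_map] at ha
    rcases ha with ha | ⟨b, hb, rfl⟩
    · have := hred.2.1 a (by simp [ha]); have := hu a ha; omega
    · have := hred.2.1 b (by simp [hb]); have := hv b hb; omega
  have hext := extD_length_map_sub (n := n) (u := u) fun a ha => (hv a ha).le
  rw [← hext] at hred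
  refine ⟨?_, hlet, ?_⟩
  · have := hred.length_eq
    rw [length_extD, dim_succ] at this
    show _ = Dim n
    omega
  · have := hred.2.2
    rw [wordProd_extD _ hlet, longestPerm_succ] at this
    exact mul_right_cancel this

lemma IsReduced.exists_isContractionD (hw : IsReduced m w) : ∃ j, IsContractionD m w j := by
  obtain ⟨u, v, h⟩ := hw.exists_descWord
  exact ⟨_, u, v, h, rfl⟩

lemma IsReduced.indD_le (hw : IsReduced (n + 1) w) : indD (n + 1) w ≤ Dim n := by
  obtain ⟨u, v, h⟩ := hw.exists_descWord
  have := (h.isReduced hw).length_eq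
  rw [hw.indD_eq h]
  simp only [List.length_append, length_descWord, dim_succ] at this
  omega

end DContraction

section Flip

variable {n m : ℕ} {w w' i j : List ℕ}

/-- Conjugation by `w₀`: the letter `a` becomes `m + 1 - a`. -/
def flipWord (m : ℕ) (w : List ℕ) : List ℕ := w.map (m + 1 - ·)

@[simp] lemma flipWord_append (x y : List ℕ) :
    flipWord m (x ++ y) = flipWord m x ++ flipWord m y :=
  List.map_append ..

@[simp] lemma flipWord_cons (a : ℕ) (w : List ℕ) :
    flipWord m (a :: w) = (m + 1 - a) :: flipWord m w :=
  rfl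

lemma flipWord_flipWord (hw : ∀ a ∈ w, a ≤ m + 1) : flipWord m (flipWord m w) = w := by
  rw [flipWord, flipWord, List.map_map]
  conv_rhs => rw [← List.map_id w]
  exact List.map_congr_left fun a ha => by have := hw a ha; simp; omega

lemma flipWord_descWord (m : ℕ) : flipWord m (descWord m) = ascWord m := by
  refine List.ext_getElem (by simp [flipWord, descWord, ascWord]) fun k h₁ h₂ => ?_
  simp only [flipWord, descWord, ascWord, List.getElem_map, List.getElem_reverse,
    List.getElem_range, List.length_map, List.length_range]
  simp only [flipWord, descWord, ascWord, List.length_map, List.length_reverse,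
    List.length_range] at h₁
  omega

lemma TwoMoveStep.flipWord (h : TwoMoveStep w w') (hw : ∀ a ∈ w, a ≤ m + 1) :
    TwoMoveStep (flipWord m w) (flipWord m w') := by
  obtain ⟨u, v, a, b, hab, rfl, rfl⟩ := h
  have ha := hw a (by simp)
  have hb := hw b (by simp)
  exact ⟨flipWord m u, flipWord m v, m + 1 - a, m + 1 - b, by omega, by simp, by simp⟩

lemma TwoMoveEquiv.flipWord (h : w ∼ w') (hw : ∀ a ∈ w, a ≤ m + 1) :
    flipWord m w ∼ flipWord m w' := by
  induction h with
  | refl => rfl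
  | tail h₁ h₂ ih => exact ih.trans (.single (h₂.flipWord (TwoMoveEquiv.forall_mem h₁ hw)))

lemma longestPerm_mul_sTrans_mul {a : ℕ} (ha : 1 ≤ a ∧ a ≤ m) :
    longestPerm m * sTrans a * longestPerm m = sTrans (m + 1 - a) := by
  ext x
  simp only [Equiv.Perm.mul_apply, longestPerm_apply, sTrans_apply]
  split_ifs <;> omega

lemma longestPerm_mul_self (m : ℕ) : longestPerm m * longestPerm m = 1 := by
  ext x
  simp only [Equiv.Perm.mul_apply, longestPerm_apply, Equiv.Perm.one_apply]
  split_ifs <;> omega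

lemma wordProd_flipWord (hw : ∀ a ∈ w, 1 ≤ a ∧ a ≤ m) :
    wordProd (flipWord m w) = longestPerm m * wordProd w * longestPerm m := by
  induction w with
  | nil => simp [flipWord, longestPerm_mul_self]
  | cons a w ih =>
    rw [flipWord_cons, wordProd_cons, ih fun b hb => hw b (by simp [hb]),
      ← longestPerm_mul_sTrans_mul (hw a (by simp)), wordProd_cons]
    simp only [mul_assoc, ← mul_assoc (longestPerm m) (longestPerm m), longestPerm_mul_self,
      one_mul]

lemma isReduced_flipWord (hw : IsReduced m w) : IsReduced m (flipWord m w) := by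
  refine ⟨by rw [flipWord, List.length_map, hw.1], fun a ha => ?_, ?_⟩
  · obtain ⟨b, hb, rfl⟩ := List.mem_map.1 ha
    have := hw.2.1 b hb; omega
  · rw [wordProd_flipWord hw.2.1, hw.2.2, longestPerm_mul_self, one_mul]

end Flip

section AContraction

variable {n m : ℕ} {w i j : List ℕ}

lemma flipWord_ascWord (m : ℕ) : flipWord m (ascWord m) = descWord m := by
  rw [← flipWord_descWord, flipWord_flipWord fun a ha => by have := mem_descWord ha; omega]

lemma extA_eq_flipWord (s : ℕ) (hi : ∀ a ∈ i, a ≤ n + 1) :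
    extA n s i = flipWord (n + 1) (extD n s (flipWord n i)) := by
  have hlen : (flipWord n i).length = i.length := List.length_map ..
  simp only [extA, extD, hlen, flipWord_append, flipWord_descWord]
  simp only [flipWord, ← List.map_take, ← List.map_drop, List.map_map]
  congr 2
  · exact List.map_congr_left fun a ha => by have := hi a (List.mem_of_mem_take ha); simp; omega
  · conv_lhs => rw [← List.map_id (List.drop _ i)]
    exact List.map_congr_left fun a ha => by have := hi a (List.mem_of_mem_drop ha); simp; omega

lemma IsReduced.indA_eq (hw : IsReduced m w) : indA m w = indD m (flipWord m w) := by
  have hw' := isReduced_flipWord hw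
  have hle : ∀ a ∈ w, a ≤ m + 1 := fun a ha => by have := hw.2.1 a ha; omega
  rw [indA, indD]
  congr 1
  ext s
  refine ⟨fun ⟨u, v, hs, h⟩ => ⟨flipWord m u, flipWord m v, by simp [flipWord, hs], ?_⟩,
    fun ⟨u, v, hs, h⟩ => ⟨flipWord m u, flipWord m v, by simp [flipWord, hs], ?_⟩⟩
  · simpa [flipWord_ascWord] using h.flipWord (m := m) hle
  · have := h.flipWord (m := m) fun a ha => by have := hw'.2.1 a ha; omega
    simpa [flipWord_flipWord hle, flipWord_descWord] using this

lemma IsContractionA.isContractionD_flipWord (hw : IsReduced (n + 1) w)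
    (hj : IsContractionA (n + 1) w j) :
    IsContractionD (n + 1) (flipWord (n + 1) w) (flipWord n j) := by
  obtain ⟨u, v, h, rfl⟩ := hj
  have hlet := (h.isReduced hw).2.1
  refine ⟨flipWord (n + 1) u, flipWord (n + 1) v, ?_, ?_⟩
  · simpa [flipWord_ascWord] using h.flipWord (m := n + 1) fun a ha => by
      have := hw.2.1 a ha; omega
  · simp only [flipWord, List.map_append, List.map_map]
    congr 1 <;> exact List.map_congr_left fun a ha => by have := hlet a (by simp [ha]); simp; omega

lemma IsContractionA.forall_le (hw : IsReduced (n + 1) w) (hj : IsContractionA (n + 1) w j) :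
    ∀ a ∈ j, a ≤ n + 1 := by
  obtain ⟨u, v, h, rfl⟩ := hj
  have hlet := (h.isReduced hw).2.1
  intro a ha
  simp only [List.mem_append, List.mem_map] at ha
  rcases ha with ⟨b, hb, rfl⟩ | ha
  · have := hlet b (by simp [hb]); omega
  · have := hlet a (by simp [ha]); omega

lemma isReduced_extA (hi : IsReduced n i) (s : ℕ) : IsReduced (n + 1) (extA n s i) := by
  rw [extA_eq_flipWord s fun a ha => by have := hi.2.1 a ha; omega]
  exact isReduced_flipWord (isReduced_extD (isReduced_flipWord hi) s)

lemma IsReduced.indA_extA (hi : IsReduced n i) {s : ℕ} (hs : s ≤ Dim n) :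
    indA (n + 1) (extA n s i) = s := by
  have hi' := isReduced_flipWord hi
  rw [(isReduced_extA hi s).indA_eq, extA_eq_flipWord s fun a ha => by have := hi.2.1 a ha; omega,
    flipWord_flipWord fun a ha => by have := (isReduced_extD hi' s).2.1 a ha; omega,
    hi'.indD_extD hs]

lemma isContractionA_extA (n s : ℕ) (i : List ℕ) : IsContractionA (n + 1) (extA n s i) i :=
  ⟨_, _, .refl _, by rw [map_sub_one_map_add_one, List.take_append_drop]⟩

lemma IsContractionA.twoMoveEquiv {j' : List ℕ} (hw : IsReduced (n + 1) w)
    (hj : IsContractionA (n + 1) w j) (hj' : IsContractionA (n + 1) w j') : j ∼ j' := by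
  have := ((hj.isContractionD_flipWord hw).twoMoveEquiv (isReduced_flipWord hw)
    (hj'.isContractionD_flipWord hw)).flipWord (m := n) fun a ha => by
      obtain ⟨b, -, rfl⟩ := List.mem_map.1 ha; omega
  rwa [flipWord_flipWord (hj.forall_le hw), flipWord_flipWord (hj'.forall_le hw)] at this

lemma IsContractionA.extA_indA (hw : IsReduced (n + 1) w) (hj : IsContractionA (n + 1) w j) :
    extA n (indA (n + 1) w) j ∼ w := by
  have hD := hj.isContractionD_flipWord hw
  have hw' := isReduced_flipWord hw
  have := (hD.extD_indD hw').flipWord (m := n + 1) fun a ha => by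
    have := (isReduced_extD (hD.isReduced hw') _).2.1 a ha; omega
  rwa [← extA_eq_flipWord _ (hj.forall_le hw), ← hw.indA_eq,
    flipWord_flipWord fun a ha => by have := hw.2.1 a ha; omega] at this

lemma IsContractionA.isReduced (hw : IsReduced (n + 1) w) (hj : IsContractionA (n + 1) w j) :
    IsReduced n j := by
  have := isReduced_flipWord ((hj.isContractionD_flipWord hw).isReduced (isReduced_flipWord hw))
  rwa [flipWord_flipWord (hj.forall_le hw)] at this

lemma IsReduced.exists_isContractionA (hw : IsReduced m w) : ∃ j, IsContractionA m w j := by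
  obtain ⟨u, v, h⟩ := (isReduced_flipWord hw).exists_descWord
  have := h.flipWord (m := m) fun a ha => by
    have := (isReduced_flipWord hw).2.1 a ha; omega
  rw [flipWord_flipWord fun a ha => by have := hw.2.1 a ha; omega] at this
  exact ⟨_, flipWord m u, flipWord m v, by simpa [flipWord_descWord] using this, rfl⟩

lemma IsReduced.indA_le (hw : IsReduced (n + 1) w) : indA (n + 1) w ≤ Dim n :=
  hw.indA_eq ▸ (isReduced_flipWord hw).indD_le

end AContraction

theorem statement3_general (n : ℕ) :
    (∀ i : List ℕ, IsReduced n i → ∀ s, s ≤ Dim n →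
      (IsReduced (n + 1) (extD n s i) ∧ indD (n + 1) (extD n s i) = s ∧
        ∀ j, IsContractionD (n + 1) (extD n s i) j → TwoMoveEquiv j i) ∧
      (IsReduced (n + 1) (extA n s i) ∧ indA (n + 1) (extA n s i) = s ∧
        ∀ j, IsContractionA (n + 1) (extA n s i) j → TwoMoveEquiv j i)) ∧
    (∀ i : List ℕ, IsReduced (n + 1) i →
      (∀ j, IsContractionD (n + 1) i j → TwoMoveEquiv (extD n (indD (n + 1) i) j) i) ∧
      (∀ j, IsContractionA (n + 1) i j → TwoMoveEquiv (extA n (indA (n + 1) i) j) i)) ∧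
    (∀ i' : List ℕ, IsReduced n i' → ∀ s, s ≤ Dim n →
      (∃ i, IsReduced (n + 1) i ∧ indD (n + 1) i = s ∧ IsContractionD (n + 1) i i') ∧
      (∃ i, IsReduced (n + 1) i ∧ indA (n + 1) i = s ∧ IsContractionA (n + 1) i i')) ∧
    (∀ i : List ℕ, IsReduced (n + 1) i →
      (∃ i₀ s, IsReduced n i₀ ∧ s ≤ Dim n ∧ TwoMoveEquiv (extD n s i₀) i) ∧
      (∃ i₀ s, IsReduced n i₀ ∧ s ≤ Dim n ∧ TwoMoveEquiv (extA n s i₀) i)) := by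
  refine ⟨fun i hi s hs => ?_, fun i hi => ?_, fun i hi s hs => ?_, fun i hi => ?_⟩
  · exact ⟨⟨isReduced_extD hi s, hi.indD_extD hs, fun j hj =>
        hj.twoMoveEquiv (isReduced_extD hi s) (isContractionD_extD n s i)⟩,
      ⟨isReduced_extA hi s, hi.indA_extA hs, fun j hj =>
        hj.twoMoveEquiv (isReduced_extA hi s) (isContractionA_extA n s i)⟩⟩
  · exact ⟨fun j hj => hj.extD_indD hi, fun j hj => hj.extA_indA hi⟩
  · exact ⟨⟨_, isReduced_extD hi s, hi.indD_extD hs, isContractionD_extD n s i⟩,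
      ⟨_, isReduced_extA hi s, hi.indA_extA hs, isContractionA_extA n s i⟩⟩
  · obtain ⟨j, hj⟩ := hi.exists_isContractionD
    obtain ⟨j', hj'⟩ := hi.exists_isContractionA
    exact ⟨⟨j, _, hj.isReduced hi, hi.indD_le, hj.extD_indD hi⟩,
      ⟨j', _, hj'.isReduced hi, hi.indA_le, hj'.extA_indA hi⟩⟩

/-- contractions and extensions.
For `• ∈ {A, D}`: (a) for `i ∈ Σ_{n+1}` and `0 ≤ s ≤ N`, the word `E_•(s)(i)` is a
reduced word in `Σ_{n+2}` with `C_•(E_•(s)(i)) ∼ i` and `ind_•(E_•(s)(i)) = s`;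
(b) for `i ∈ Σ_{n+2}`, `E_•(ind_•(i))(C_•(i)) ∼ i`.  In particular
`i ↦ (C_•(i), ind_•(i))` is surjective onto `Σ_{n+1} × {0,…,N}`, `E_•` is a section
of it, and the composition of `E_•` with the quotient to 2-move classes is surjective. -/
theorem statement3 (n : ℕ) (hn : 1 ≤ n) :
    (∀ i : List ℕ, IsReduced n i → ∀ s, s ≤ Dim n →
      (IsReduced (n + 1) (extD n s i) ∧ indD (n + 1) (extD n s i) = s ∧
        ∀ j, IsContractionD (n + 1) (extD n s i) j → TwoMoveEquiv j i) ∧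
      (IsReduced (n + 1) (extA n s i) ∧ indA (n + 1) (extA n s i) = s ∧
        ∀ j, IsContractionA (n + 1) (extA n s i) j → TwoMoveEquiv j i)) ∧
    (∀ i : List ℕ, IsReduced (n + 1) i →
      (∀ j, IsContractionD (n + 1) i j → TwoMoveEquiv (extD n (indD (n + 1) i) j) i) ∧
      (∀ j, IsContractionA (n + 1) i j → TwoMoveEquiv (extA n (indA (n + 1) i) j) i)) ∧
    (∀ i' : List ℕ, IsReduced n i' → ∀ s, s ≤ Dim n →
      (∃ i, IsReduced (n + 1) i ∧ indD (n + 1) i = s ∧ IsContractionD (n + 1) i i') ∧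
      (∃ i, IsReduced (n + 1) i ∧ indA (n + 1) i = s ∧ IsContractionA (n + 1) i i')) ∧
    (∀ i : List ℕ, IsReduced (n + 1) i →
      (∃ i₀ s, IsReduced n i₀ ∧ s ≤ Dim n ∧ TwoMoveEquiv (extD n s i₀) i) ∧
      (∃ i₀ s, IsReduced n i₀ ∧ s ≤ Dim n ∧ TwoMoveEquiv (extA n s i₀) i)) :=
  statement3_general n

end StringPolytope
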